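/- arXiv:2211.16284 — 6 statements merged into one kernel-verified Lean document; each statement's English description precedes it below -/
import Mathlib

section
/- The induction axiom (Ind) is sound: in any CIEL model, if a world x satisfies C_{ψ∨χ}(φ → (C_ψ φ ∧ C_χ φ)) and satisfies φ, then x satisfies C_{ψ∨χ} φ. -/
/-- `∼_A`: reflexive-transitive closure of the union of the `∼_a`, `a ∈ A`. -/
def simSet {W Ag : Type} (sim : Ag → W → W → Prop) (A : Set Ag) : W → W → Prop :=
  Relation.ReflTransGen (fun x y => ∃ a ∈ A, sim a x y)

/-- Semantics of the common-knowledge operator: `x ⊨ C_ψ φ` iff every `y` with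
`x ∼_⟦ψ⟧ y` satisfies `φ`. -/
def Cbox {W Ag : Type} (sim : Ag → W → W → Prop) (A : Set Ag) (φ : Set W) : Set W :=
  {x | ∀ y, simSet sim A x y → y ∈ φ}

/-- Soundness of the induction axiom (Ind): if
`x ⊨ C_{ψ∨χ}(φ → (C_ψ φ ∧ C_χ φ))` and `x ⊨ φ`, then `x ⊨ C_{ψ∨χ} φ`. -/
theorem soundInd {W Ag : Type} (sim : Ag → W → W → Prop)
    (hsim : ∀ a, Equivalence (sim a)) (extψ extχ : Set Ag) (φ : Set W) (x : W)
    (h1 : x ∈ Cbox sim (extψ ∪ extχ)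
      {y | y ∈ φ → (y ∈ Cbox sim extψ φ ∧ y ∈ Cbox sim extχ φ)})
    (h2 : x ∈ φ) :
    x ∈ Cbox sim (extψ ∪ extχ) φ := by
  intro y hy
  induction hy with
  | refl => exact h2
  | tail hyz hstep ih =>
    rename_i b c
    obtain ⟨a, ha, hs⟩ := hstep
    have hb := h1 b hyz ih
    cases ha with
    | inl h => exact hb.1 c (Relation.ReflTransGen.single ⟨a, h, hs⟩)
    | inr h => exact hb.2 c (Relation.ReflTransGen.single ⟨a, h, hs⟩)
end

section
/- The generalized induction principle is semantically valid: in any CIEL model, for finite families of agent formulae ψ_1,…,ψ_n, if a world x satisfies C_{ψ_1∨⋯∨ψ_n}(φ → (C_{ψ_1}φ ∧ ⋯ ∧ C_{ψ_n}φ)) and satisfies φ, then x satisfies C_{ψ_1∨⋯∨ψ_n} φ. -/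
/-- Semantic validity of the generalized induction principle for finite
families `ψ_1, …, ψ_n` of agent formulae. -/
theorem soundGenInd {W Ag : Type} (sim : Ag → W → W → Prop)
    (hsim : ∀ a, Equivalence (sim a)) (n : ℕ) (exts : Fin n → Set Ag)
    (φ : Set W) (x : W)
    (h1 : x ∈ Cbox sim (⋃ i, exts i)
      {y | y ∈ φ → ∀ i, y ∈ Cbox sim (exts i) φ})
    (h2 : x ∈ φ) :
    x ∈ Cbox sim (⋃ i, exts i) φ := by
  intro y hy
  induction hy with
  | refl => exact h2
  | tail hzw hstep ih =>
    rename_i z w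
    obtain ⟨a, ha, haw⟩ := hstep
    rw [Set.mem_iUnion] at ha
    obtain ⟨i, hi⟩ := ha
    have hz : z ∈ φ := ih
    have := h1 z hzw hz i
    exact this w (Relation.ReflTransGen.single ⟨a, hi, haw⟩)
end

section
/- CIEL fails to be compact: there exist an unsatisfiable set of CIEL formulae all of whose finite subsets are satisfiable, namely the set consisting of ¬C_{A∨B} p together with all formulae C_{D_1} C_{D_2} ⋯ C_{D_n} p for n ≥ 0 and D_1,…,D_n ∈ {A,B}, where A, B are atomic agent concepts and p is a world atom. -/
/-- Agent formulae built from the atomic agent concepts `A`, `B` and disjunction. -/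
inductive AgF9 : Type
  | A | B
  | or (ψ χ : AgF9)

/-- World formulae: the world atom `p`, negation, and common knowledge. -/
inductive WF9 : Type
  | p
  | not (φ : WF9)
  | C (ψ : AgF9) (φ : WF9)

/-- A CIEL model (for this signature): worlds, agents, extensions of the two
atomic agent concepts, a valuation of `p`, and per-agent equivalence relations. -/
structure M9 where
  W : Type
  Agt : Type
  extA : Set Agt
  extB : Set Agt
  valp : Set W
  sim : Agt → W → W → Prop
  equiv : ∀ a, Equivalence (sim a)

/-- Extension of an agent formula. -/
def ext9 (M : M9) : AgF9 → Set M.Agt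
  | .A => M.extA
  | .B => M.extB
  | .or ψ χ => ext9 M ψ ∪ ext9 M χ

/-- Satisfaction of world formulae; `C_ψ` is the box over the
reflexive-transitive closure of the union of `∼_a` over `a ∈ ⟦ψ⟧`. -/
def sat9 (M : M9) : M.W → WF9 → Prop
  | x, .p => x ∈ M.valp
  | x, .not φ => ¬ sat9 M x φ
  | x, .C ψ φ =>
      ∀ y, Relation.ReflTransGen (fun u v => ∃ a ∈ ext9 M ψ, M.sim a u v) x y →
        sat9 M y φ

/-- `C_{D_1} C_{D_2} ⋯ C_{D_n} p`, where `true` codes `A` and `false` codes `B`. -/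
def chain9 : List Bool → WF9
  | [] => .p
  | d :: ds => .C (if d then .A else .B) (chain9 ds)

/-- The set `{¬C_{A∨B} p} ∪ {C_{D_1}⋯C_{D_n} p | n ≥ 0, D_i ∈ {A,B}}`. -/
def S9 : Set WF9 :=
  insert (.not (.C (.or .A .B) .p)) {φ | ∃ l : List Bool, φ = chain9 l}

/-!
A world satisfying every chain `C_{D_1} ⋯ C_{D_n} p` satisfies `p` at every world reachable by
`A`- and `B`-steps, since each reachable world is reached by a finite chain of such steps; so it
satisfies `C_{A∨B} p`, and the whole set is unsatisfiable.

For finite satisfiability, take the worlds `ℕ`, one `A`-agent whose classes are `{2k, 2k+1}`,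
one `B`-agent whose classes are `{2k-1, 2k}`, and let `p` hold up to `N`. Each `C_A` or `C_B`
advances at most one world, so chains of length at most `N` hold at `0`; but the two agents
together link `0` to every world, so `C_{A∨B} p` fails at `0`.
-/

open Function Relation

/-- One step of the relation whose reflexive-transitive closure interprets `C_ψ`. -/
def commonStep (M : M9) (ψ : AgF9) (u v : M.W) : Prop :=
  ∃ a ∈ ext9 M ψ, M.sim a u v

section Unsatisfiable

variable {M : M9}

theorem forall_sat9_chain9_of_commonStep {x y : M.W} (hxy : commonStep M (.or .A .B) x y)
    (hx : ∀ l, sat9 M x (chain9 l)) (l : List Bool) : sat9 M y (chain9 l) := by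
  obtain ⟨a, ha | ha, hsim⟩ := hxy
  · exact hx (true :: l) y (.single ⟨a, ha, hsim⟩)
  · exact hx (false :: l) y (.single ⟨a, ha, hsim⟩)

theorem sat9_C_or_of_forall_sat9_chain9 {x : M.W} (hx : ∀ l, sat9 M x (chain9 l)) :
    sat9 M x (.C (.or .A .B) .p) := by
  intro y hxy
  induction hxy using ReflTransGen.head_induction_on with
  | refl => exact hx []
  | head hstep _ ih => exact ih (forall_sat9_chain9_of_commonStep hstep hx)

theorem not_satisfiable_S9 : ¬ ∃ (M : M9) (x : M.W), ∀ φ ∈ S9, sat9 M x φ := by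
  rintro ⟨M, x, hx⟩
  exact hx _ (Set.mem_insert _ _) <|
    sat9_C_or_of_forall_sat9_chain9 fun l ↦ hx _ (Set.mem_insert_of_mem _ ⟨l, rfl⟩)

end Unsatisfiable

section FinitelySatisfiable

/-- The index of the class of `u` for the agent `a`: `true` is the `A`-agent with classes
`{2k, 2k+1}`, `false` the `B`-agent with classes `{2k-1, 2k}`. -/
def blockIndex (a : Bool) (u : ℕ) : ℕ :=
  if a then u / 2 else (u + 1) / 2

abbrev ladderModel (N : ℕ) : M9 where
  W := ℕ
  Agt := Bool
  extA := {true}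
  extB := {false}
  valp := {w | w ≤ N}
  sim a u v := blockIndex a u = blockIndex a v
  equiv _ := ⟨fun _ ↦ rfl, Eq.symm, Eq.trans⟩

variable {N : ℕ}

theorem le_succ_of_reflTransGen_commonStep_ladderModel {ψ : AgF9} {a : Bool}
    (hψ : ext9 (ladderModel N) ψ = {a}) {u v : ℕ}
    (huv : ReflTransGen (commonStep (ladderModel N) ψ) u v) : v ≤ u + 1 := by
  have hstep : commonStep (ladderModel N) ψ ≤ (Eq on blockIndex a) := by
    rintro u v ⟨b, hb, hsim⟩
    rw [hψ, Set.mem_singleton_iff] at hb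
    exact hb ▸ hsim
  have := ReflTransGen.lift (blockIndex a) hstep u v huv
  rw [reflTransGen_eq_self] at this
  cases a <;> simp only [onFun, blockIndex, Bool.false_eq_true, if_true, if_false] at this <;> omega

theorem sat9_chain9_ladderModel (l : List Bool) {w : ℕ} (hw : w + l.length ≤ N) :
    sat9 (ladderModel N) w (chain9 l) := by
  induction l generalizing w with
  | nil => show w ≤ N; simpa using hw
  | cons d ds ih =>
    have hext : ext9 (ladderModel N) (if d then .A else .B) = {d} := by cases d <;> rfl
    intro v hv
    have hvw := le_succ_of_reflTransGen_commonStep_ladderModel hext hv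
    exact ih (by simp only [List.length_cons] at hw; omega)

theorem commonStep_or_ladderModel_succ (m : ℕ) :
    commonStep (ladderModel N) (.or .A .B) m (m + 1) := by
  by_cases hm : m % 2 = 0
  · refine ⟨true, Or.inl rfl, ?_⟩
    change m / 2 = (m + 1) / 2
    omega
  · refine ⟨false, Or.inr rfl, ?_⟩
    change (m + 1) / 2 = (m + 1 + 1) / 2
    omega

theorem not_sat9_C_or_ladderModel_zero :
    ¬ sat9 (ladderModel N) (0 : ℕ) (.C (.or .A .B) .p) := by
  intro h
  have hreach : ReflTransGen (commonStep (ladderModel N) (.or .A .B)) (0 : ℕ) (N + 1) := by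
    induction N + 1 with
    | zero => rfl
    | succ m ih => exact ih.tail (commonStep_or_ladderModel_succ m)
  exact Nat.not_succ_le_self N (h (N + 1) hreach)

end FinitelySatisfiable

def WF9.depth : WF9 → ℕ
  | .p => 0
  | .not φ => φ.depth + 1
  | .C _ φ => φ.depth + 1

theorem depth_chain9 (l : List Bool) : (chain9 l).depth = l.length := by
  induction l with
  | nil => rfl
  | cons d ds ih => cases d <;> simp [chain9, WF9.depth, ih]

/-- CIEL is not compact: `S9` is unsatisfiable, but every finite subset of
`S9` is satisfiable. -/
theorem ciel_not_compact :
    (¬ ∃ (M : M9) (x : M.W), ∀ φ ∈ S9, sat9 M x φ) ∧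
    (∀ T : Finset WF9, ↑T ⊆ S9 → ∃ (M : M9) (x : M.W), ∀ φ ∈ T, sat9 M x φ) := by
  refine ⟨not_satisfiable_S9, fun T hT ↦ ⟨ladderModel (T.sup WF9.depth), (0 : ℕ), ?_⟩⟩
  intro φ hφ
  rcases hT hφ with rfl | ⟨l, rfl⟩
  · exact not_sat9_C_or_ladderModel_zero
  · have hlen : l.length ≤ T.sup WF9.depth := depth_chain9 l ▸ Finset.le_sup hφ
    exact sat9_chain9_ladderModel l (by omega)
end

section
/- The GEL-to-CIEL translation q preserves satisfiability from GEL to CIEL: given a model (M, x) of a GEL formula φ over agent set Ag, the CIEL model obtained by keeping the same worlds, indistinguishability relations, and world valuation, and interpreting each fresh agent atom p_a as the singleton {a}, satisfies the translation q(φ) at x, where q commutes with all Boolean connectives and maps C_G φ to C_{⋁_{a∈G} p_a} q(φ). -/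
/-- Agent formulae: falsum, an atom `p_a` per agent name `a`, and disjunction. -/
inductive AgF (Ag : Type) : Type
  | bot
  | atom (a : Ag)
  | or (ψ χ : AgF Ag)

/-- GEL formulae over agent set `Ag` and world atoms `At`. -/
inductive GF (Ag At : Type) : Type
  | bot
  | atom (p : At)
  | not (φ : GF Ag At)
  | and (φ χ : GF Ag At)
  | C (G : Finset Ag) (φ : GF Ag At)

/-- CIEL formulae whose agent formulae come from `AgF Ag`. -/
inductive CF (Ag At : Type) : Type
  | bot
  | atom (p : At)
  | not (φ : CF Ag At)
  | and (φ χ : CF Ag At)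
  | C (ψ : AgF Ag) (φ : CF Ag At)

/-- The disjunction `⋁_{a ∈ l} p_a`. -/
def bigOr {Ag : Type} (l : List Ag) : AgF Ag :=
  l.foldr (fun a ψ => .or (.atom a) ψ) .bot

/-- The translation `q`: commutes with Boolean connectives and maps
`C_G φ` to `C_{⋁_{a∈G} p_a} q(φ)`. -/
noncomputable def q {Ag At : Type} : GF Ag At → CF Ag At
  | .bot => .bot
  | .atom p => .atom p
  | .not φ => .not (q φ)
  | .and φ χ => .and (q φ) (q χ)
  | .C G φ => .C (bigOr G.toList) (q (φ))

/-- Extension of an agent formula, given a valuation `V` of the agent atoms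
over a set `Ag'` of agents. -/
def extA {Ag Ag' : Type} (V : Ag → Set Ag') : AgF Ag → Set Ag'
  | .bot => ∅
  | .atom a => V a
  | .or ψ χ => extA V ψ ∪ extA V χ

/-- GEL satisfaction: `x ⊨ C_G φ` iff every `y` with `x ∼_G y` satisfies `φ`,
where `∼_G = (⋃_{a∈G} ∼_a)*`. -/
def satG {X Ag At : Type} (sim : Ag → X → X → Prop) (val : At → Set X) :
    X → GF Ag At → Prop
  | _, .bot => False
  | x, .atom p => x ∈ val p
  | x, .not φ => ¬ satG sim val x φ
  | x, .and φ χ => satG sim val x φ ∧ satG sim val x χ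
  | x, .C G φ =>
      ∀ y, Relation.ReflTransGen (fun u v => ∃ a ∈ G, sim a u v) x y →
        satG sim val y φ

/-- CIEL satisfaction over a model with agents `Ag'`, agent-atom valuation `V`,
and per-agent relations `sim`. -/
def satC {X Ag Ag' At : Type} (V : Ag → Set Ag') (sim : Ag' → X → X → Prop)
    (val : At → Set X) : X → CF Ag At → Prop
  | _, .bot => False
  | x, .atom p => x ∈ val p
  | x, .not φ => ¬ satC V sim val x φ
  | x, .and φ χ => satC V sim val x φ ∧ satC V sim val x χ
  | x, .C ψ φ =>
      ∀ y, Relation.ReflTransGen (fun u v => ∃ b ∈ extA V ψ, sim b u v) x y →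
        satC V sim val y φ

/-! Under the valuation `p_a ↦ {a}` the agent formula `⋁_{a∈G} p_a` denotes exactly `G`, so the
relation `∼_G` of GEL and the relation used by CIEL for `C_{⋁_{a∈G} p_a}` coincide. Hence `q`
preserves and reflects satisfaction, by induction on the formula. -/

lemma extA_bigOr {Ag Ag' : Type} (V : Ag → Set Ag') (l : List Ag) :
    extA V (bigOr l) = ⋃ a ∈ l, V a := by
  induction l with
  | nil => simp [bigOr, extA]
  | cons b t ih =>
    simp only [bigOr, List.foldr] at ih ⊢
    simp [extA, ih]

lemma extA_singleton_bigOr_toList {Ag : Type} (G : Finset Ag) :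
    extA (fun a => ({a} : Set Ag)) (bigOr G.toList) = ↑G := by
  ext a
  simp [extA_bigOr]

lemma satC_q_iff_satG {X Ag At : Type} (sim : Ag → X → X → Prop) (val : At → Set X)
    (φ : GF Ag At) (x : X) :
    satC (fun a => ({a} : Set Ag)) sim val x (q φ) ↔ satG sim val x φ := by
  induction φ generalizing x with
  | bot => simp [satG, satC, q]
  | atom p => simp [satG, satC, q]
  | not φ ih => simp [satG, satC, q, ih]
  | and φ χ ih₁ ih₂ => simp [satG, satC, q, ih₁, ih₂]
  | C G φ ih => simp only [satG, satC, q, extA_singleton_bigOr_toList, Finset.mem_coe, ih]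

theorem q_preserves_sat_general {X Ag At : Type} (sim : Ag → X → X → Prop)
    (val : At → Set X)
    (φ : GF Ag At) (x : X) (h : satG sim val x φ) :
    satC (fun a => ({a} : Set Ag)) sim val x (q φ) :=
  (satC_q_iff_satG sim val φ x).mpr h

/-- The translation `q` preserves satisfaction from GEL to CIEL: keeping the
same worlds, relations and world valuation, and interpreting each agent atom
`p_a` as the singleton `{a}`, a model of `φ` at `x` yields a model of
`q(φ)` at `x`. -/
theorem q_preserves_sat {X Ag At : Type} (sim : Ag → X → X → Prop)
    (hsim : ∀ a, Equivalence (sim a)) (val : At → Set X)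
    (φ : GF Ag At) (x : X) (h : satG sim val x φ) :
    satC (fun a => ({a} : Set Ag)) sim val x (q φ) :=
  q_preserves_sat_general sim val φ x h
end

section
/- Existence Lemma: if Γ is a maximal consistent subset of the closure Σ and ¬C_ψ φ ∈ Γ, then there exists a maximal consistent subset Δ of Σ with ¬φ ∈ Δ and Γ ∼^p_ψ Δ, i.e., Γ̂ ∧ P_ψ Δ̂ is consistent. -/
/-- CIEL world formulae over agent formulae `AgF` and world atoms `At`,
with `⊥` and `→` as primitive Boolean connectives. -/
inductive WF (AgF At : Type) : Type
  | bot
  | atom (p : At)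
  | imp (φ χ : WF AgF At)
  | C (ψ : AgF) (φ : WF AgF At)

/-- Negation `¬φ := φ → ⊥`. -/
def wneg {AgF At : Type} (φ : WF AgF At) : WF AgF At := .imp φ .bot

/-- Conjunction `φ ∧ χ := ¬(φ → ¬χ)`. -/
def wand {AgF At : Type} (φ χ : WF AgF At) : WF AgF At := wneg (.imp φ (wneg χ))

/-- `P_ψ φ := ¬C_ψ ¬φ`. -/
def wP {AgF At : Type} (ψ : AgF) (φ : WF AgF At) : WF AgF At := wneg (.C ψ (wneg φ))

/-- Conjunction of a finite list of formulae. -/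
def conj {AgF At : Type} : List (WF AgF At) → WF AgF At
  | [] => wneg .bot
  | φ :: l => wand φ (conj l)

/-- The Hilbert system `C5`: a complete propositional base together with the
axioms (T), (⊥), (K), (4), (5), (Ind) and the rules (Nec) and (AM); the rule
(AM) refers to derivability `AgDer γ ψ` of `γ → ψ` in the agent logic, and
`agBot`, `agOr` are falsum and disjunction of agent formulae. -/
inductive C5 {AgF At : Type} (AgDer : AgF → AgF → Prop) (agBot : AgF)
    (agOr : AgF → AgF → AgF) : WF AgF At → Prop
  | ax1 (φ χ) : C5 AgDer agBot agOr (.imp φ (.imp χ φ))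
  | ax2 (φ χ θ) : C5 AgDer agBot agOr
      (.imp (.imp φ (.imp χ θ)) (.imp (.imp φ χ) (.imp φ θ)))
  | ax3 (φ χ) : C5 AgDer agBot agOr
      (.imp (.imp (wneg φ) (wneg χ)) (.imp χ φ))
  | mp {φ χ} : C5 AgDer agBot agOr (.imp φ χ) → C5 AgDer agBot agOr φ →
      C5 AgDer agBot agOr χ
  | axT (ψ φ) : C5 AgDer agBot agOr (.imp (.C ψ φ) φ)
  | axBot (φ) : C5 AgDer agBot agOr (.imp φ (.C agBot φ))
  | axK (ψ φ γ) : C5 AgDer agBot agOr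
      (.imp (.C ψ (.imp φ γ)) (.imp (.C ψ φ) (.C ψ γ)))
  | ax4 (ψ φ) : C5 AgDer agBot agOr (.imp (.C ψ φ) (.C ψ (.C ψ φ)))
  | ax5 (ψ φ) : C5 AgDer agBot agOr
      (.imp (wneg (.C ψ φ)) (.C ψ (wneg (.C ψ φ))))
  | axInd (ψ χ φ) : C5 AgDer agBot agOr
      (.imp (.C (agOr ψ χ) (.imp φ (wand (.C ψ φ) (.C χ φ))))
        (.imp φ (.C (agOr ψ χ) φ)))
  | nec {φ} (ψ) : C5 AgDer agBot agOr φ → C5 AgDer agBot agOr (.C ψ φ)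
  | am {γ ψ} (φ) : AgDer γ ψ →
      C5 AgDer agBot agOr (.imp (.C ψ φ) (.C γ φ))

/-- A formula is consistent if its negation is not derivable. -/
def Consistent {AgF At : Type} (AgDer : AgF → AgF → Prop) (agBot : AgF)
    (agOr : AgF → AgF → AgF) (φ : WF AgF At) : Prop :=
  ¬ C5 AgDer agBot agOr (wneg φ)

/-- `Γ` is a maximal consistent subset of `Σ`. -/
def MCS {AgF At : Type} (AgDer : AgF → AgF → Prop) (agBot : AgF)
    (agOr : AgF → AgF → AgF) (Sig Γ : Finset (WF AgF At)) : Prop :=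
  Γ ⊆ Sig ∧ Consistent AgDer agBot agOr (conj Γ.toList) ∧
    ∀ Δ : Finset (WF AgF At), Δ ⊆ Sig → Γ ⊆ Δ →
      Consistent AgDer agBot agOr (conj Δ.toList) → Δ = Γ

/-- The canonical pseudo-relation: `Γ ∼^p_ψ Δ` iff `Γ̂ ∧ P_ψ Δ̂` is consistent. -/
def relP {AgF At : Type} (AgDer : AgF → AgF → Prop) (agBot : AgF)
    (agOr : AgF → AgF → AgF) (ψ : AgF) (Γ Δ : Finset (WF AgF At)) : Prop :=
  Consistent AgDer agBot agOr (wand (conj Γ.toList) (wP ψ (conj Δ.toList)))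

/-- Normalized negation: `¬̇(¬χ) = χ` and `¬̇φ = ¬φ` otherwise. -/
def sneg {AgF At : Type} : WF AgF At → WF AgF At
  | .imp φ .bot => φ
  | φ => wneg φ

namespace CIELEx
open WF

variable {AgF At : Type} {AgDer : AgF → AgF → Prop} {agBot : AgF} {agOr : AgF → AgF → AgF}

/-- Boolean evaluation, treating atoms and `C`-formulae as propositional atoms. -/
def eval (v : WF AgF At → Bool) : WF AgF At → Bool
  | .bot => false
  | .atom p => v (.atom p)
  | .imp a b => !eval v a || eval v b
  | .C ψ a => v (.C ψ a)

@[simp] lemma eval_bot (v : WF AgF At → Bool) : eval v .bot = false := rfl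
@[simp] lemma eval_imp (v : WF AgF At → Bool) (a b : WF AgF At) :
    eval v (.imp a b) = (!eval v a || eval v b) := rfl
@[simp] lemma eval_C (v : WF AgF At → Bool) (ψ : AgF) (a : WF AgF At) :
    eval v (.C ψ a) = v (.C ψ a) := rfl
@[simp] lemma eval_wneg (v : WF AgF At → Bool) (a : WF AgF At) :
    eval v (wneg a) = !eval v a := by simp [wneg]
@[simp] lemma eval_wand (v : WF AgF At → Bool) (a b : WF AgF At) :
    eval v (wand a b) = (eval v a && eval v b) := by
  simp [wand, wneg]
@[simp] lemma eval_wP (v : WF AgF At → Bool) (ψ : AgF) (a : WF AgF At) :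
    eval v (wP ψ a) = !v (.C ψ (wneg a)) := by simp [wP]
@[simp] lemma eval_conj (v : WF AgF At → Bool) :
    ∀ l : List (WF AgF At), eval v (conj l) = l.all (eval v)
  | [] => by simp [conj]
  | a :: l => by simp [conj, eval_conj v l]
@[simp] lemma eval_sneg (v : WF AgF At → Bool) (a : WF AgF At) :
    eval v (sneg a) = !eval v a := by
  have h : sneg a = wneg a ∨ ∃ x, a = .imp x .bot ∧ sneg a = x := by
    cases a with
    | bot => exact Or.inl rfl
    | atom p => exact Or.inl rfl
    | C ψ x => exact Or.inl rfl
    | imp x y =>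
      cases y with
      | bot => exact Or.inr ⟨x, rfl, rfl⟩
      | atom p => exact Or.inl rfl
      | imp a b => exact Or.inl rfl
      | C ψ z => exact Or.inl rfl
  rcases h with h | ⟨x, rfl, h⟩
  · rw [h]; simp
  · rw [h]; simp

/-- Derivability from a list of hypotheses. -/
inductive DF (AgDer : AgF → AgF → Prop) (agBot : AgF) (agOr : AgF → AgF → AgF)
    (L : List (WF AgF At)) : WF AgF At → Prop
  | hyp {φ} : φ ∈ L → DF AgDer agBot agOr L φ
  | ax {φ} : C5 AgDer agBot agOr φ → DF AgDer agBot agOr L φ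
  | mp {φ χ} : DF AgDer agBot agOr L (.imp φ χ) → DF AgDer agBot agOr L φ →
      DF AgDer agBot agOr L χ

lemma dfWeak {L L' : List (WF AgF At)} (h : ∀ x ∈ L, x ∈ L') {φ}
    (d : DF AgDer agBot agOr L φ) : DF AgDer agBot agOr L' φ := by
  induction d with
  | hyp h' => exact .hyp (h _ h')
  | ax h' => exact .ax h'
  | mp _ _ ih1 ih2 => exact .mp ih1 ih2

lemma derId (φ : WF AgF At) : C5 AgDer agBot agOr (.imp φ φ) :=
  (C5.mp (C5.mp (C5.ax2 φ (.imp φ φ) φ) (C5.ax1 φ (.imp φ φ))) (C5.ax1 φ φ))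

lemma dfDed {L : List (WF AgF At)} {a φ : WF AgF At}
    (d : DF AgDer agBot agOr (a :: L) φ) : DF AgDer agBot agOr L (.imp a φ) := by
  induction d with
  | @hyp χ h =>
    rcases List.mem_cons.1 h with h | h
    · subst h; exact .ax (derId _)
    · exact .mp (.ax (C5.ax1 _ _)) (.hyp h)
  | ax h => exact .mp (.ax (C5.ax1 _ _)) (.ax h)
  | mp _ _ ih1 ih2 => exact .mp (.mp (.ax (C5.ax2 _ _ _)) ih1) ih2

lemma dfDer {φ : WF AgF At} (d : DF AgDer agBot agOr [] φ) : C5 AgDer agBot agOr φ := by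
  induction d with
  | hyp h => simp at h
  | ax h => exact h
  | mp _ _ ih1 ih2 => exact ih1.mp ih2

lemma derEfq (φ : WF AgF At) : C5 AgDer agBot agOr (.imp .bot φ) :=
  (C5.ax3 φ .bot).mp ((C5.ax1 (wneg .bot) (wneg φ)).mp (derId .bot))

lemma derDN (φ : WF AgF At) : C5 AgDer agBot agOr (.imp φ (wneg (wneg φ))) := by
  apply dfDer
  apply dfDed
  show DF AgDer agBot agOr [φ] (.imp (wneg φ) .bot)
  apply dfDed
  exact DF.mp (show DF AgDer agBot agOr [wneg φ, φ] (.imp φ .bot) from DF.hyp (by simp [wneg]))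
    (DF.hyp (by simp))

lemma derDNE (φ : WF AgF At) : C5 AgDer agBot agOr (.imp (wneg (wneg φ)) φ) :=
  (C5.ax3 φ (wneg (wneg φ))).mp (derDN (wneg φ))

lemma dfRAA {L : List (WF AgF At)} {φ : WF AgF At}
    (d : DF AgDer agBot agOr (wneg φ :: L) .bot) : DF AgDer agBot agOr L φ :=
  .mp (.ax (derDNE φ)) (dfDed d)

lemma dfCases {L : List (WF AgF At)} {a φ : WF AgF At}
    (h1 : DF AgDer agBot agOr (a :: L) φ)
    (h2 : DF AgDer agBot agOr (wneg a :: L) φ) : DF AgDer agBot agOr L φ := by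
  have d1 := dfDed h1
  have d2 := dfDed h2
  apply dfRAA
  have hnφ : DF AgDer agBot agOr (wneg φ :: L) (wneg φ) := .hyp (by simp)
  have na : DF AgDer agBot agOr (wneg φ :: L) (wneg a) := by
    apply dfDed
    exact .mp (dfWeak (by intro x hx; simp [hx]) hnφ)
      (.mp (dfWeak (by intro x hx; simp [hx]) d1) (.hyp (by simp)))
  exact .mp hnφ (.mp (dfWeak (by intro x hx; simp [hx]) d2) na)

/-- The atomic subformulae. -/
def atoms : WF AgF At → List (WF AgF At)
  | .bot => []
  | .atom p => [.atom p]
  | .imp a b => atoms a ++ atoms b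
  | .C ψ a => [.C ψ a]

lemma eval_atoms {φ a : WF AgF At} (h : a ∈ atoms φ) (v : WF AgF At → Bool) :
    eval v a = v a := by
  induction φ with
  | bot => simp [atoms] at h
  | atom p => simp [atoms] at h; subst h; rfl
  | imp x y ihx ihy =>
    rcases List.mem_append.1 h with h | h
    exacts [ihx h, ihy h]
  | C ψ x ih => simp [atoms] at h; subst h; rfl

/-- The signed version of a formula under a valuation. -/
def vf (v : WF AgF At → Bool) (φ : WF AgF At) : WF AgF At :=
  if eval v φ then φ else wneg φ

lemma kalmar (φ : WF AgF At) (v : WF AgF At → Bool) (L : List (WF AgF At))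
    (hL : ∀ a ∈ atoms φ, vf v a ∈ L) : DF AgDer agBot agOr L (vf v φ) := by
  induction φ with
  | bot =>
    have hb : vf v (.bot : WF AgF At) = wneg .bot := by simp [vf]
    rw [hb]; exact .ax (derId .bot)
  | atom p => exact .hyp (hL _ (by simp [atoms]))
  | C ψ x ih => exact .hyp (hL _ (by simp [atoms]))
  | imp a b iha ihb =>
    have ha := iha (fun x hx => hL x (by simp [atoms, hx]))
    have hb := ihb (fun x hx => hL x (by simp [atoms, hx]))
    cases hea : eval v a with
    | false =>
      have e : vf v (.imp a b) = .imp a b := by simp [vf, hea]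
      rw [e]
      rw [show vf v a = wneg a by simp [vf, hea]] at ha
      apply dfDed
      exact DF.mp (DF.ax (derEfq b))
        (DF.mp (show DF AgDer agBot agOr (a :: L) (.imp a .bot) from
            dfWeak (by intro x hx; simp [hx]) ha) (DF.hyp (by simp)))
    | true =>
      cases heb : eval v b with
      | true =>
        have e : vf v (.imp a b) = .imp a b := by simp [vf, hea, heb]
        rw [e]
        rw [show vf v b = b by simp [vf, heb]] at hb
        exact dfDed (dfWeak (by intro x hx; simp [hx]) hb)
      | false =>
        have e : vf v (.imp a b) = wneg (.imp a b) := by simp [vf, hea, heb]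
        rw [e]
        rw [show vf v a = a by simp [vf, hea]] at ha
        rw [show vf v b = wneg b by simp [vf, heb]] at hb
        show DF AgDer agBot agOr L (.imp (.imp a b) .bot)
        apply dfDed
        exact DF.mp (show DF AgDer agBot agOr (.imp a b :: L) (.imp b .bot) from
            dfWeak (by intro x hx; simp [hx]) hb)
          (DF.mp (DF.hyp (by simp)) (dfWeak (by intro x hx; simp [hx]) ha))

lemma tautRec (φ : WF AgF At) (l : List (WF AgF At)) (hnd : l.Nodup)
    (hat : ∀ a ∈ l, ∀ v : WF AgF At → Bool, eval v a = v a)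
    (h : ∀ v : WF AgF At → Bool, DF AgDer agBot agOr (l.map (vf v)) φ) :
    C5 AgDer agBot agOr φ := by
  classical
  induction l with
  | nil => exact dfDer (h (fun _ => false))
  | cons a l ih =>
    have hmem : a ∉ l := (List.nodup_cons.1 hnd).1
    apply ih (List.nodup_cons.1 hnd).2 (fun x hx v => hat x (by simp [hx]) v)
    intro v
    have key : ∀ b : Bool,
        (l.map (vf (fun x => if x = a then b else v x)) = l.map (vf v)) ∧
        eval (fun x => if x = a then b else v x) a = b := by
      intro b
      constructor
      · apply List.map_congr_left
        intro x hx
        have hxa : x ≠ a := fun hxa => hmem (hxa ▸ hx)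
        have ex : eval (fun y => if y = a then b else v y) x = eval v x := by
          rw [hat x (by simp [hx]), hat x (by simp [hx])]
          simp [hxa]
        simp [vf, ex]
      · rw [hat a (by simp)]; simp
    have h1 : DF AgDer agBot agOr (a :: l.map (vf v)) φ := by
      have := h (fun x => if x = a then true else v x)
      rw [List.map_cons, (key true).1] at this
      rw [show vf (fun x => if x = a then true else v x) a = a from by
        unfold vf; rw [(key true).2]; simp] at this
      exact this
    have h2 : DF AgDer agBot agOr (wneg a :: l.map (vf v)) φ := by
      have := h (fun x => if x = a then false else v x)
      rw [List.map_cons, (key false).1] at this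
      rw [show vf (fun x => if x = a then false else v x) a = wneg a from by
        unfold vf; rw [(key false).2]; simp] at this
      exact this
    exact dfCases h1 h2

lemma taut {φ : WF AgF At} (h : ∀ v : WF AgF At → Bool, eval v φ = true) :
    C5 AgDer agBot agOr φ := by
  classical
  apply tautRec φ (atoms φ).dedup (List.nodup_dedup _)
    (fun a ha v => eval_atoms (List.mem_dedup.1 ha) v)
  intro v
  have := kalmar (AgDer := AgDer) (agBot := agBot) (agOr := agOr) φ v
    ((atoms φ).dedup.map (vf v))
    (fun a ha => List.mem_map.2 ⟨a, List.mem_dedup.2 ha, rfl⟩)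
  rw [show vf v φ = φ by simp [vf, h v]] at this
  exact this

lemma derMono (ψ : AgF) {a b : WF AgF At} (h : C5 AgDer agBot agOr (.imp a b)) :
    C5 AgDer agBot agOr (.imp (.C ψ a) (.C ψ b)) :=
  (C5.axK ψ a b).mp (C5.nec ψ h)

lemma derCand (ψ : AgF) (a b : WF AgF At) :
    C5 AgDer agBot agOr (.imp (.C ψ a) (.imp (.C ψ b) (.C ψ (wand a b)))) := by
  have h1 : C5 AgDer agBot agOr (.C ψ (.imp a (.imp b (wand a b)))) :=
    C5.nec ψ (taut (by
      intro v; cases ha : eval v a <;> cases hb : eval v b <;> simp [ha, hb]))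
  have h2 := (C5.axK ψ a (.imp b (wand a b))).mp h1
  have h3 := C5.axK (AgDer := AgDer) (agBot := agBot) (agOr := agOr) (At := At)
    ψ b (wand a b)
  have comp : C5 AgDer agBot agOr
      (.imp (.imp (.C ψ a) (.C ψ (.imp b (wand a b))))
        (.imp (.imp (.C ψ (.imp b (wand a b))) (.imp (.C ψ b) (.C ψ (wand a b))))
          (.imp (.C ψ a) (.imp (.C ψ b) (.C ψ (wand a b)))))) :=
    taut (by
      intro v
      cases h1 : v (C ψ a) <;> cases h2 : v (C ψ (WF.imp b (wand a b))) <;>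
        cases h3 : v (C ψ b) <;> cases h4 : v (C ψ (wand a b)) <;>
        simp [h1, h2, h3, h4])
  exact (comp.mp h2).mp h3
lemma notCon_iff {G E : WF AgF At} {ψ : AgF}
    (h : ¬ Consistent AgDer agBot agOr (wand G (wP ψ E))) :
    C5 AgDer agBot agOr (.imp G (.C ψ (wneg E))) := by
  rw [Consistent, not_not] at h
  refine (taut ?_).mp h
  intro v
  cases hg : eval v G <;> cases hx : v (.C ψ (wneg E)) <;> simp [hg, hx]

lemma con_of_imp {G E : WF AgF At} {ψ : AgF}
    (h : C5 AgDer agBot agOr (.imp G (.C ψ (wneg E)))) :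
    ¬ Consistent AgDer agBot agOr (wand G (wP ψ E)) := by
  rw [Consistent, not_not]
  refine (taut ?_).mp h
  intro v
  cases hg : eval v G <;> cases hx : v (.C ψ (wneg E)) <;> simp [hg, hx]

lemma extendOne [DecidableEq (WF AgF At)] {Γ Δ : Finset (WF AgF At)} {ψ : AgF}
    (hcon : Consistent AgDer agBot agOr (wand (conj Γ.toList) (wP ψ (conj Δ.toList))))
    (χ : WF AgF At) :
    Consistent AgDer agBot agOr
      (wand (conj Γ.toList) (wP ψ (conj (insert χ Δ).toList))) ∨
    Consistent AgDer agBot agOr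
      (wand (conj Γ.toList) (wP ψ (conj (insert (sneg χ) Δ).toList))) := by
  classical
  by_contra hno
  push_neg at hno
  have h1 := notCon_iff hno.1
  have h2 := notCon_iff hno.2
  set G := conj Γ.toList with hGdef
  set E1 := conj (insert χ Δ).toList with hE1
  set E2 := conj (insert (sneg χ) Δ).toList with hE2
  have hcand := derCand (AgDer := AgDer) (agBot := agBot) (agOr := agOr)
    ψ (wneg E1) (wneg E2)
  have hcomb : C5 AgDer agBot agOr
      (.imp (.imp G (.C ψ (wneg E1)))
        (.imp (.imp G (.C ψ (wneg E2)))
          (.imp (.imp (.C ψ (wneg E1)) (.imp (.C ψ (wneg E2))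
              (.C ψ (wand (wneg E1) (wneg E2)))))
            (.imp G (.C ψ (wand (wneg E1) (wneg E2))))))) := by
    apply taut
    intro v
    cases hg : eval v G <;> cases ha : v (.C ψ (wneg E1)) <;>
      cases hb : v (.C ψ (wneg E2)) <;>
      cases hw : v (.C ψ (wand (wneg E1) (wneg E2))) <;> simp [hg, ha, hb, hw]
  have hGW : C5 AgDer agBot agOr (.imp G (.C ψ (wand (wneg E1) (wneg E2)))) :=
    ((hcomb.mp h1).mp h2).mp hcand
  have hW : C5 AgDer agBot agOr
      (.imp (wand (wneg E1) (wneg E2)) (wneg (conj Δ.toList))) := by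
    apply taut
    intro v
    rw [hE1, hE2]
    simp only [eval_imp, eval_wand, eval_wneg, eval_conj]
    by_cases hall : (Δ.toList.all (eval v)) = true
    · by_cases hχ : eval v χ = true
      · have hx : (insert χ Δ).toList.all (eval v) = true := by
          simp only [List.all_eq_true, Finset.mem_toList, Finset.mem_insert] at hall ⊢
          rintro x (rfl | hx)
          exacts [hχ, hall x hx]
        simp [hx]
      · have hx : (insert (sneg χ) Δ).toList.all (eval v) = true := by
          simp only [List.all_eq_true, Finset.mem_toList, Finset.mem_insert] at hall ⊢
          rintro x (rfl | hx)
          · rw [eval_sneg]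
            simp [show eval v χ = false by revert hχ; cases eval v χ <;> simp]
          · exact hall x hx
        simp [hx]
    · simp [hall]
  have hmono := derMono ψ hW
  have hcomp : C5 AgDer agBot agOr
      (.imp (.imp G (.C ψ (wand (wneg E1) (wneg E2))))
        (.imp (.imp (.C ψ (wand (wneg E1) (wneg E2))) (.C ψ (wneg (conj Δ.toList))))
          (.imp G (.C ψ (wneg (conj Δ.toList)))))) := by
    apply taut
    intro v
    cases hg : eval v G <;> cases hw : v (.C ψ (wand (wneg E1) (wneg E2))) <;>
      cases hz : v (.C ψ (wneg (conj Δ.toList))) <;> simp [hg, hw, hz]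
  exact con_of_imp ((hcomp.mp hGW).mp hmono) hcon

lemma extendAll [DecidableEq (WF AgF At)] {Sig Γ : Finset (WF AgF At)} {ψ : AgF}
    (hsneg : ∀ x ∈ Sig, sneg x ∈ Sig) (l : List (WF AgF At)) :
    (∀ χ ∈ l, χ ∈ Sig) → ∀ Δ : Finset (WF AgF At), Δ ⊆ Sig →
    Consistent AgDer agBot agOr (wand (conj Γ.toList) (wP ψ (conj Δ.toList))) →
    ∃ Δ' : Finset (WF AgF At), Δ ⊆ Δ' ∧ Δ' ⊆ Sig ∧
      Consistent AgDer agBot agOr (wand (conj Γ.toList) (wP ψ (conj Δ'.toList))) ∧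
      ∀ χ ∈ l, χ ∈ Δ' ∨ sneg χ ∈ Δ' := by
  classical
  induction l with
  | nil =>
    intro _ Δ hS hc
    exact ⟨Δ, Finset.Subset.refl _, hS, hc, by simp⟩
  | cons χ l ih =>
    intro hl Δ hS hc
    have hl' : ∀ x ∈ l, x ∈ Sig := fun x hx => hl x (by simp [hx])
    rcases extendOne hc χ with h | h
    · obtain ⟨Δ', hh1, hh2, hh3, hh4⟩ := ih hl' (insert χ Δ)
        (Finset.insert_subset_iff.2 ⟨hl χ (by simp), hS⟩) h
      refine ⟨Δ', (Finset.subset_insert _ _).trans hh1, hh2, hh3, ?_⟩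
      intro x hx
      rcases List.mem_cons.1 hx with rfl | hx
      · exact Or.inl (hh1 (Finset.mem_insert_self _ _))
      · exact hh4 x hx
    · obtain ⟨Δ', hh1, hh2, hh3, hh4⟩ := ih hl' (insert (sneg χ) Δ)
        (Finset.insert_subset_iff.2 ⟨hsneg χ (hl χ (by simp)), hS⟩) h
      refine ⟨Δ', (Finset.subset_insert _ _).trans hh1, hh2, hh3, ?_⟩
      intro x hx
      rcases List.mem_cons.1 hx with rfl | hx
      · exact Or.inr (hh1 (Finset.mem_insert_self _ _))
      · exact hh4 x hx
lemma derComp {x y z : WF AgF At} (h1 : C5 AgDer agBot agOr (.imp x y))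
    (h2 : C5 AgDer agBot agOr (.imp y z)) : C5 AgDer agBot agOr (.imp x z) := by
  have hcomp : C5 AgDer agBot agOr (.imp (.imp x y) (.imp (.imp y z) (.imp x z))) := by
    apply taut
    intro v
    cases hx : eval v x <;> cases hy : eval v y <;> cases hz : eval v z <;>
      simp [hx, hy, hz]
  exact (hcomp.mp h1).mp h2

lemma derContr {g x : WF AgF At} (h1 : C5 AgDer agBot agOr (.imp g x))
    (h2 : C5 AgDer agBot agOr (.imp g (wneg x))) :
    C5 AgDer agBot agOr (wneg g) := by
  have hcomp : C5 AgDer agBot agOr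
      (.imp (.imp g x) (.imp (.imp g (wneg x)) (wneg g))) := by
    apply taut
    intro v
    cases hg : eval v g <;> cases hx : eval v x <;> simp [hg, hx]
  exact (hcomp.mp h1).mp h2

end CIELEx

open CIELEx

/-- Existence Lemma: if `Γ` is a maximal consistent subset of the closure `Σ`
(closed under subformulae and normalized negation, and containing `¬φ`
whenever `¬C_ψ φ ∈ Σ`) and `¬C_ψ φ ∈ Γ`, then there is a maximal consistent
subset `Δ` of `Σ` with `¬φ ∈ Δ` and `Γ ∼^p_ψ Δ`. -/
theorem existence_lemma {AgF At : Type} (AgDer : AgF → AgF → Prop) (agBot : AgF)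
    (agOr : AgF → AgF → AgF) (Sig : Finset (WF AgF At))
    (hsubImp : ∀ φ χ : WF AgF At, WF.imp φ χ ∈ Sig → φ ∈ Sig ∧ χ ∈ Sig)
    (hsubC : ∀ (ψ : AgF) (φ : WF AgF At), WF.C ψ φ ∈ Sig → φ ∈ Sig)
    (hsneg : ∀ φ ∈ Sig, sneg φ ∈ Sig)
    (hnegC : ∀ (ψ : AgF) (φ : WF AgF At), wneg (WF.C ψ φ) ∈ Sig → wneg φ ∈ Sig)
    (ψ : AgF) (φ : WF AgF At) (Γ : Finset (WF AgF At))
    (hΓ : MCS AgDer agBot agOr Sig Γ) (hmem : wneg (WF.C ψ φ) ∈ Γ) :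
    ∃ Δ : Finset (WF AgF At), MCS AgDer agBot agOr Sig Δ ∧ wneg φ ∈ Δ ∧
      relP AgDer agBot agOr ψ Γ Δ := by
  classical
  obtain ⟨hΓS, hΓcon, hΓmax⟩ := hΓ
  have hφSig : wneg φ ∈ Sig := hnegC ψ φ (hΓS hmem)
  -- Step 1: Γ̂ ∧ P_ψ (¬φ) is consistent.
  have h0 : Consistent AgDer agBot agOr
      (wand (conj Γ.toList) (wP ψ (conj ({wneg φ} : Finset (WF AgF At)).toList))) := by
    intro hder
    have hD : C5 AgDer agBot agOr (.imp (conj Γ.toList)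
        (.C ψ (wneg (conj ({wneg φ} : Finset (WF AgF At)).toList)))) :=
      notCon_iff (fun hc => hc hder)
    have hstep : C5 AgDer agBot agOr
        (.imp (wneg (conj ({wneg φ} : Finset (WF AgF At)).toList)) φ) := by
      apply taut
      intro v
      rw [Finset.toList_singleton]
      cases hf : eval v φ <;> simp [hf]
    have hGC : C5 AgDer agBot agOr (.imp (conj Γ.toList) (.C ψ φ)) :=
      derComp hD (derMono ψ hstep)
    have hGn : C5 AgDer agBot agOr (.imp (conj Γ.toList) (wneg (.C ψ φ))) := by
      apply taut
      intro v
      simp only [eval_imp, eval_wneg, eval_C, eval_conj]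
      by_cases hall : Γ.toList.all (eval v) = true
      · have hm := (List.all_eq_true.mp hall) _ (Finset.mem_toList.2 hmem)
        simp only [eval_wneg, eval_C] at hm
        simp [hall, hm]
      · simp [show Γ.toList.all (eval v) = false by
          revert hall; cases Γ.toList.all (eval v) <;> simp]
    exact hΓcon (derContr hGC hGn)
  -- Step 2: extend through all of Σ.
  obtain ⟨Δ, hsub, hΔS, hΔcon, hΔall⟩ := extendAll (Γ := Γ) (ψ := ψ) hsneg
    Sig.toList (fun x hx => Finset.mem_toList.1 hx) {wneg φ}
    (Finset.singleton_subset_iff.2 hφSig) h0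
  refine ⟨Δ, ⟨hΔS, ?_, ?_⟩, hsub (Finset.mem_singleton_self _), hΔcon⟩
  · -- Δ̂ is consistent.
    intro hder
    have h1 := C5.nec (ψ := ψ) hder
    refine hΔcon ((taut ?_).mp h1)
    intro v
    cases hg : eval v (conj Γ.toList) <;>
      cases hx : v (.C ψ (wneg (conj Δ.toList))) <;> simp [hg, hx]
  · -- Δ is maximal.
    intro Δ'' hS'' hsub'' hcon''
    refine Finset.Subset.antisymm ?_ hsub''
    intro χ hχ
    by_contra hnot
    rcases hΔall χ (Finset.mem_toList.2 (hS'' hχ)) with h | h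
    · exact hnot h
    · refine hcon'' (taut ?_)
      intro v
      have hfalse : Δ''.toList.all (eval v) = false := by
        rw [List.all_eq_false]
        cases hc : eval v χ
        · exact ⟨χ, Finset.mem_toList.2 hχ, by simp [hc]⟩
        · exact ⟨sneg χ, Finset.mem_toList.2 (hsub'' h), by simp [hc]⟩
      simp [hfalse]
end

section
/- In the C5 proof system, every instance of the generalized induction axiom C_{⋁_{i=1}^n ψ_i}(φ → ⋀_{i=1}^n C_{ψ_i} φ) → (φ → C_{⋁_{i=1}^n ψ_i} φ) for n ≥ 0 is derivable. -/
/-- The disjunction `⋁_{ψ ∈ l} ψ` of a list of agent formulae. -/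
def bigOrA {AgF : Type} (agBot : AgF) (agOr : AgF → AgF → AgF)
    (l : List AgF) : AgF :=
  l.foldr agOr agBot

section Aux

variable {AgF At : Type} {AgDer : AgF → AgF → Prop} {agBot : AgF}
  {agOr : AgF → AgF → AgF}

/-- Derivability from a list of hypotheses, on top of `C5`. -/
inductive DerC5 (AgDer : AgF → AgF → Prop) (agBot : AgF)
    (agOr : AgF → AgF → AgF) : List (WF AgF At) → WF AgF At → Prop
  | hyp {Γ φ} : φ ∈ Γ → DerC5 AgDer agBot agOr Γ φ
  | thm {Γ φ} : C5 AgDer agBot agOr φ → DerC5 AgDer agBot agOr Γ φ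
  | mp {Γ φ χ} : DerC5 AgDer agBot agOr Γ (.imp φ χ) →
      DerC5 AgDer agBot agOr Γ φ → DerC5 AgDer agBot agOr Γ χ

lemma c5_id (φ : WF AgF At) : C5 AgDer agBot agOr (.imp φ φ) :=
  (C5.ax2 φ (.imp φ φ) φ).mp (C5.ax1 φ (.imp φ φ)) |>.mp (C5.ax1 φ φ)

/-- Deduction theorem. -/
lemma DerC5.ded {Γ : List (WF AgF At)} {φ χ : WF AgF At}
    (h : DerC5 AgDer agBot agOr (φ :: Γ) χ) :
    DerC5 AgDer agBot agOr Γ (.imp φ χ) := by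
  generalize hΓ : φ :: Γ = Γ' at h
  induction h with
  | hyp hm =>
    subst hΓ
    rcases List.mem_cons.mp hm with rfl | h
    · exact .thm (c5_id _)
    · exact .mp (.thm (C5.ax1 _ _)) (.hyp h)
  | thm ht => exact .mp (.thm (C5.ax1 _ _)) (.thm ht)
  | mp _ _ ih1 ih2 =>
    exact .mp (.mp (.thm (C5.ax2 _ _ _)) ih1) ih2

lemma DerC5.toC5 {φ : WF AgF At} (h : DerC5 AgDer agBot agOr [] φ) :
    C5 AgDer agBot agOr φ := by
  generalize hΓ : ([] : List (WF AgF At)) = Γ' at h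
  induction h with
  | hyp hm => subst hΓ; simp at hm
  | thm ht => exact ht
  | mp _ _ ih1 ih2 => exact ih1.mp ih2

lemma c5_exfalso (φ : WF AgF At) : C5 AgDer agBot agOr (.imp .bot φ) := by
  have h0 : DerC5 AgDer agBot agOr [WF.bot, wneg φ] (.bot : WF AgF At) :=
    .hyp (by simp)
  have h1 : C5 AgDer agBot agOr (.imp (wneg φ) (wneg .bot)) :=
    DerC5.toC5 (DerC5.ded (DerC5.ded h0))
  exact (C5.ax3 φ .bot).mp h1

lemma c5_dne (φ : WF AgF At) :
    C5 AgDer agBot agOr (.imp (wneg (wneg φ)) φ) := by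
  have ha : DerC5 AgDer agBot agOr [wneg (wneg φ), wneg φ]
      (.imp (wneg φ) .bot) := .hyp (by simp [wneg])
  have hb : DerC5 AgDer agBot agOr [wneg (wneg φ), wneg φ] (wneg φ) :=
    .hyp (by simp)
  have h1 : C5 AgDer agBot agOr (.imp (wneg φ) (wneg (wneg (wneg φ)))) :=
    DerC5.toC5 (DerC5.ded (DerC5.ded (ha.mp hb)))
  exact (C5.ax3 φ (wneg (wneg φ))).mp h1

lemma DerC5.byContra {Γ : List (WF AgF At)} {φ : WF AgF At}
    (h : DerC5 AgDer agBot agOr (wneg φ :: Γ) .bot) :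
    DerC5 AgDer agBot agOr Γ φ :=
  .mp (.thm (c5_dne φ)) h.ded

lemma c5_andE1 (φ χ : WF AgF At) :
    C5 AgDer agBot agOr (.imp (wand φ χ) φ) := by
  refine DerC5.toC5 (DerC5.ded (DerC5.byContra ?_))
  -- context: [¬φ, φ∧χ]
  have hna : DerC5 AgDer agBot agOr [φ, wneg φ, wand φ χ] (.imp φ .bot) :=
    .hyp (by simp [wneg])
  have hb : DerC5 AgDer agBot agOr [φ, wneg φ, wand φ χ]
      (.imp .bot (wneg χ)) := .thm (c5_exfalso _)
  have h1 : DerC5 AgDer agBot agOr [wneg φ, wand φ χ] (.imp φ (wneg χ)) :=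
    DerC5.ded (hb.mp (hna.mp (.hyp (by simp))))
  have h2 : DerC5 AgDer agBot agOr [wneg φ, wand φ χ]
      (.imp (.imp φ (wneg χ)) .bot) := .hyp (by simp [wand, wneg])
  exact h2.mp h1

lemma c5_andE2 (φ χ : WF AgF At) :
    C5 AgDer agBot agOr (.imp (wand φ χ) χ) := by
  refine DerC5.toC5 (DerC5.ded (DerC5.byContra ?_))
  have h0 : DerC5 AgDer agBot agOr [φ, wneg χ, wand φ χ] (wneg χ) :=
    .hyp (by simp)
  have h1 : DerC5 AgDer agBot agOr [wneg χ, wand φ χ] (.imp φ (wneg χ)) :=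
    DerC5.ded h0
  have h2 : DerC5 AgDer agBot agOr [wneg χ, wand φ χ]
      (.imp (.imp φ (wneg χ)) .bot) := .hyp (by simp [wand, wneg])
  exact h2.mp h1

lemma c5_andI (φ χ : WF AgF At) :
    C5 AgDer agBot agOr (.imp φ (.imp χ (wand φ χ))) := by
  refine DerC5.toC5 (DerC5.ded (DerC5.ded (DerC5.ded ?_)))
  -- context: [φ → ¬χ, χ, φ] ⊢ ⊥
  have ha : DerC5 AgDer agBot agOr [.imp φ (wneg χ), χ, φ]
      (.imp φ (.imp χ .bot)) := .hyp (by simp [wneg])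
  have hb : DerC5 AgDer agBot agOr [.imp φ (wneg χ), χ, φ] φ :=
    .hyp (by simp)
  have hc : DerC5 AgDer agBot agOr [.imp φ (wneg χ), χ, φ] χ :=
    .hyp (by simp)
  exact (ha.mp hb).mp hc

/-- From `⊢ χ → θ` infer `⊢ (φ → χ) → (φ → θ)`. -/
lemma c5_liftImp {χ θ : WF AgF At} (φ : WF AgF At)
    (h : C5 AgDer agBot agOr (.imp χ θ)) :
    C5 AgDer agBot agOr (.imp (.imp φ χ) (.imp φ θ)) :=
  (C5.ax2 φ χ θ).mp ((C5.ax1 _ _).mp h)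

lemma c5_impTrans {φ χ θ : WF AgF At}
    (h1 : C5 AgDer agBot agOr (.imp φ χ))
    (h2 : C5 AgDer agBot agOr (.imp χ θ)) :
    C5 AgDer agBot agOr (.imp φ θ) :=
  (c5_liftImp φ h2).mp h1

/-- Monotonicity of `C_ψ`. -/
lemma c5_monoC {φ χ : WF AgF At} (ψ : AgF)
    (h : C5 AgDer agBot agOr (.imp φ χ)) :
    C5 AgDer agBot agOr (.imp (.C ψ φ) (.C ψ χ)) :=
  (C5.axK ψ φ χ).mp (C5.nec ψ h)

end Aux

/-- Every instance of the generalized induction axiom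
`C_{⋁ᵢψᵢ}(φ → ⋀ᵢ C_{ψᵢ}φ) → (φ → C_{⋁ᵢψᵢ}φ)` is derivable in `C5`,
assuming the agent logic derives the disjunction introductions. -/
theorem gen_ind_derivable {AgF At : Type} (AgDer : AgF → AgF → Prop)
    (agBot : AgF) (agOr : AgF → AgF → AgF)
    (hOr1 : ∀ ψ χ, AgDer ψ (agOr ψ χ))
    (hOr2 : ∀ ψ χ, AgDer χ (agOr ψ χ))
    (ψs : List AgF) (φ : WF AgF At) :
    C5 AgDer agBot agOr
      (.imp (.C (bigOrA agBot agOr ψs) (.imp φ (conj (ψs.map (fun ψ => .C ψ φ)))))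
        (.imp φ (.C (bigOrA agBot agOr ψs) φ))) := by
  induction ψs with
  | nil =>
    exact (C5.ax1 _ _).mp (C5.axBot φ)
  | cons ψ l IH =>
    set χ := bigOrA agBot agOr l with hχ
    set F : WF AgF At := conj (l.map (fun ψ => .C ψ φ)) with hF
    have hbig : bigOrA agBot agOr (ψ :: l) = agOr ψ χ := rfl
    have hK : conj ((ψ :: l).map (fun ψ => WF.C ψ φ)) = wand (.C ψ φ) F := rfl
    rw [hbig, hK]
    set K : WF AgF At := wand (.C ψ φ) F with hKdef
    set H : WF AgF At := .C (agOr ψ χ) (.imp φ K) with hH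
    -- t1 : ⊢ H → (φ → C_χ φ)
    have a1 : C5 AgDer agBot agOr (.imp H (.C χ (.imp φ K))) :=
      C5.am _ (hOr2 ψ χ)
    have b1 : C5 AgDer agBot agOr (.imp (.imp φ K) (.imp φ F)) :=
      c5_liftImp φ (c5_andE2 _ _)
    have t1 : C5 AgDer agBot agOr (.imp H (.imp φ (.C χ φ))) :=
      c5_impTrans (c5_impTrans a1 (c5_monoC χ b1)) IH
    -- t2 : ⊢ H → (φ → C_ψ φ)
    have t2 : C5 AgDer agBot agOr (.imp H (.imp φ (.C ψ φ))) :=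
      c5_impTrans (C5.axT _ _) (c5_liftImp φ (c5_andE1 _ _))
    -- t3 : ⊢ H → (φ → (C_ψ φ ∧ C_χ φ))
    have t3 : C5 AgDer agBot agOr
        (.imp H (.imp φ (wand (.C ψ φ) (.C χ φ)))) := by
      refine DerC5.toC5 (DerC5.ded (DerC5.ded ?_))
      -- context [φ, H]
      have dψ : DerC5 AgDer agBot agOr [φ, H] (.C ψ φ) :=
        .mp (.mp (.thm t2) (.hyp (by simp))) (.hyp (by simp))
      have dχ : DerC5 AgDer agBot agOr [φ, H] (.C χ φ) :=
        .mp (.mp (.thm t1) (.hyp (by simp))) (.hyp (by simp))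
      exact .mp (.mp (.thm (c5_andI _ _)) dψ) dχ
    -- lift into the box via (4) and (K)
    have t4 : C5 AgDer agBot agOr
        (.imp (.C (agOr ψ χ) H)
          (.C (agOr ψ χ) (.imp φ (wand (.C ψ φ) (.C χ φ))))) :=
      c5_monoC _ t3
    have t5 : C5 AgDer agBot agOr
        (.imp H (.C (agOr ψ χ) (.imp φ (wand (.C ψ φ) (.C χ φ))))) :=
      c5_impTrans (C5.ax4 _ _) t4
    exact c5_impTrans t5 (C5.axInd ψ χ φ)
end
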